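/- Let m, c₀, M > 0. Let 𝒦 be the set of pairs (a₀, a) where a₀ ∈ ℝ, a is a real symmetric 3×3 matrix, a₀ ≥ m, a₃₃ ≥ m, |a₀| + |a| ≤ M, and ηᵀ a η ≥ c₀|η|² for all η ∈ ℝ³; let S₊ = { ζ̃ = (γ̃, τ̃, ξ̃) ∈ ℝ × ℝ × ℝ² : γ̃ ≥ 0, γ̃² + τ̃² + |ξ̃|⁴ = 1 }. For (a₀,a,ζ̃) define the 2×2 complex matrix 𝒜(a₀,a,ζ̃) with rows (0,1) and ( (a₀/a₃₃)(γ̃+iτ̃) + Σ_{1≤i,j≤2}(a_{ij}/a₃₃) ξ̃_i ξ̃_j , −2i Σ_{k=1}^{2}(a_{k3}/a₃₃) ξ̃_k ). Then there exist κ > 0, an open set U containing 𝒦 × S₊, and an infinitely differentiable map 𝒮 : U → M₂(ℂ) taking Hermitian values on 𝒦 × S₊, such that for every (a₀,a,ζ̃) ∈ 𝒦 × S₊ and every X = (X₁,X₂) ∈ ℂ²: Re⟨ 𝒮(a₀,a,ζ̃) 𝒜(a₀,a,ζ̃) X , X ⟩ ≥ κ|X|² and ⟨ 𝒮(a₀,a,ζ̃)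 X , X ⟩ + |X₁|² ≥ κ|X|². -/

import Mathlib

/-- The parameter space: a pair `(a₀, a)` of a scalar and a (3×3)-matrix of coefficients,
together with a point `ζ̃ = (γ̃, τ̃, ξ̃)` of frequency space. -/
abbrev ParamSpace : Type :=
  (ℝ × (Fin 3 → Fin 3 → ℝ)) × (ℝ × ℝ × (Fin 2 → ℝ))

/-- The compact set `𝒦` of admissible coefficients: `a₀ ≥ m`, `a` symmetric, `a₃₃ ≥ m`,
`|a₀| + |a| ≤ M` (Frobenius norm) and `ηᵀ a η ≥ c₀ |η|²`. -/
def coeffSet (m c₀ M : ℝ) : Set (ℝ × (Fin 3 → Fin 3 → ℝ)) :=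
  {p | m ≤ p.1 ∧ m ≤ p.2 2 2 ∧ (∀ i j, p.2 i j = p.2 j i) ∧
    |p.1| + Real.sqrt (∑ i : Fin 3, ∑ j : Fin 3, (p.2 i j) ^ 2) ≤ M ∧
    ∀ η : Fin 3 → ℝ, c₀ * (∑ i : Fin 3, η i ^ 2)
      ≤ ∑ i : Fin 3, ∑ j : Fin 3, η i * p.2 i j * η j}

/-- The parabolic half unit sphere `S₊ = {(γ̃, τ̃, ξ̃) : γ̃ ≥ 0, γ̃² + τ̃² + |ξ̃|⁴ = 1}`. -/
def paraSphere : Set (ℝ × ℝ × (Fin 2 → ℝ)) :=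
  {ζ | 0 ≤ ζ.1 ∧ ζ.1 ^ 2 + ζ.2.1 ^ 2 + (∑ i : Fin 2, ζ.2.2 i ^ 2) ^ 2 = 1}

/-- The symbol `𝒜(a₀, a, ζ̃)` (10.21) of the first-order system: the 2×2 complex matrix
with rows `(0, 1)` and
`((a₀/a₃₃)(γ̃ + iτ̃) + Σ_{i,j≤2} (a_{ij}/a₃₃) ξ̃ᵢξ̃ⱼ , −2i Σ_{k≤2} (a_{k3}/a₃₃) ξ̃ₖ)`. -/
noncomputable def calA (p : ParamSpace) : Fin 2 → Fin 2 → ℂ := fun i j =>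
  if i = 0 then (if j = 0 then 0 else 1)
  else if j = 0 then
    ((p.1.1 / p.1.2 2 2 : ℝ) : ℂ) * ((p.2.1 : ℂ) + (p.2.2.1 : ℂ) * Complex.I)
      + ((∑ k : Fin 2, ∑ l : Fin 2,
            p.1.2 k.castSucc l.castSucc / p.1.2 2 2 * p.2.2.2 k * p.2.2.2 l : ℝ) : ℂ)
  else (-2) * Complex.I
    * ((∑ k : Fin 2, p.1.2 k.castSucc 2 / p.1.2 2 2 * p.2.2.2 k : ℝ) : ℂ)

/-!
The symbol `𝒜` is the companion matrix with eigenvalues `d / 2 ± √w`, where `d = 𝒜₁₁` is purely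
imaginary and `w = 𝒜₁₀ + (d / 2)²`. On `𝒦 × S₊`, `a₃₃ Re w` is `a₀ γ̃` plus a Schur complement of
`a` evaluated at `ξ̃`, so `Re w ≥ 0`, with equality only when `γ̃ = ξ̃ = 0`, where
`Im w = a₀ τ̃ / a₃₃ ≠ 0`. Hence `w` stays off `(-∞, 0]`, and the principal square root splits the
spectrum smoothly into `λ₊` with `Re λ₊ > 0` and `λ₋` with `Re λ₋ < 0`.

With the left eigenvectors `ℓ±`, the symmetrizer `ℓ₊* ℓ₊ - β ℓ₋* ℓ₋` gives
`Re⟨𝒮𝒜X, X⟩ = Re λ₊ |ℓ₊X|² - β Re λ₋ |ℓ₋X|²`, and for small `β` the boundary term `|X 0|²`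
absorbs the negative part of `⟨𝒮X, X⟩`. Compactness of `𝒦 × S₊` makes all constants uniform.
-/

open Matrix Complex

lemma Complex.normSq_add_le_two_mul (u v : ℂ) :
    normSq (u + v) ≤ 2 * (normSq u + normSq v) := by
  simp only [normSq_eq_norm_sq]
  exact (pow_le_pow_left₀ (norm_nonneg _) (norm_add_le u v) 2).trans add_sq_le

lemma re_cpow_inv_two_pos {w : ℂ} (hw : w ∈ slitPlane) : 0 < (w ^ (2⁻¹ : ℂ)).re := by
  rw [cpow_def_of_ne_zero (slitPlane_ne_zero hw), exp_re]
  refine mul_pos (Real.exp_pos _) (Real.cos_pos_of_mem_Ioo ?_)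
  have him : (log w * 2⁻¹).im = w.arg / 2 := by simp [log_im]; ring
  have hπ : w.arg < Real.pi := lt_of_le_of_ne (arg_le_pi w) (slitPlane_arg_ne_pi hw)
  rw [him]
  constructor <;> linarith [neg_pi_lt_arg w]

lemma schur_complement_ge {n : ℕ} {a : Fin (n + 1) → Fin (n + 1) → ℝ} {c₀ : ℝ} (hc₀ : 0 ≤ c₀)
    (hsym : ∀ i j, a i j = a j i)
    (hpos : ∀ η : Fin (n + 1) → ℝ, c₀ * ∑ i, η i ^ 2 ≤ ∑ i, ∑ j, η i * a i j * η j)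
    (hlast : 0 < a (Fin.last n) (Fin.last n)) (ξ : Fin n → ℝ) :
    c₀ * ∑ k, ξ k ^ 2
      ≤ ∑ k, ∑ l, a k.castSucc l.castSucc * ξ k * ξ l
        - (∑ k, a k.castSucc (Fin.last n) * ξ k) ^ 2 / a (Fin.last n) (Fin.last n) := by
  set S := ∑ k, a k.castSucc (Fin.last n) * ξ k
  set t := -S / a (Fin.last n) (Fin.last n)
  have h := hpos (Fin.snoc ξ t)
  simp only [Fin.sum_univ_castSucc, Fin.snoc_castSucc, Fin.snoc_last, hsym (Fin.last n)] at h
  have hQ : ∑ k, ∑ l, ξ k * a k.castSucc l.castSucc * ξ l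
      = ∑ k, ∑ l, a k.castSucc l.castSucc * ξ k * ξ l :=
    Finset.sum_congr rfl fun _ _ => Finset.sum_congr rfl fun _ _ => by ring
  have hS₁ : ∑ k, ξ k * a k.castSucc (Fin.last n) * t = t * S := by
    rw [Finset.mul_sum]; exact Finset.sum_congr rfl fun _ _ => by ring
  have hS₂ : ∑ k, t * a k.castSucc (Fin.last n) * ξ k = t * S := by
    rw [Finset.mul_sum]; exact Finset.sum_congr rfl fun _ _ => by ring
  rw [Finset.sum_add_distrib, hQ, hS₁, hS₂] at h
  have ht : t * S + (t * S + t * a (Fin.last n) (Fin.last n) * t)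
      = -(S ^ 2 / a (Fin.last n) (Fin.last n)) := by
    simp only [t]; field_simp; ring
  nlinarith [mul_nonneg hc₀ (sq_nonneg t)]

section Symmetrizer

variable {n : Type*}

noncomputable def symmetrizer (ℓ₁ ℓ₂ : n → ℂ) (β : ℝ) : Matrix n n ℂ :=
  vecMulVec (star ℓ₁) ℓ₁ - (β : ℂ) • vecMulVec (star ℓ₂) ℓ₂

lemma isHermitian_symmetrizer (ℓ₁ ℓ₂ : n → ℂ) (β : ℝ) :
    (symmetrizer ℓ₁ ℓ₂ β).IsHermitian := by
  simp [symmetrizer, IsHermitian, conjTranspose_sub, conjTranspose_smul]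

variable [Fintype n]

lemma vecMulVec_star_mulVec_dotProduct_star (u v X : n → ℂ) :
    (vecMulVec (star u) v *ᵥ X) ⬝ᵥ star X = (v ⬝ᵥ X) * star (u ⬝ᵥ X) := by
  simp [vecMulVec_mulVec, dotProduct, Finset.mul_sum, mul_comm, mul_left_comm]

lemma symmetrizer_mulVec_dotProduct_star (ℓ₁ ℓ₂ X : n → ℂ) (β : ℝ) :
    (symmetrizer ℓ₁ ℓ₂ β *ᵥ X) ⬝ᵥ star X = normSq (ℓ₁ ⬝ᵥ X) - β * normSq (ℓ₂ ⬝ᵥ X) := by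
  simp [symmetrizer, sub_mulVec, smul_mulVec, vecMulVec_star_mulVec_dotProduct_star,
    sub_dotProduct, mul_conj]

lemma symmetrizer_mul_mulVec_dotProduct_star {A : Matrix n n ℂ} {ℓ₁ ℓ₂ : n → ℂ} {ν₁ ν₂ : ℂ}
    (h₁ : ℓ₁ ᵥ* A = ν₁ • ℓ₁) (h₂ : ℓ₂ ᵥ* A = ν₂ • ℓ₂) (β : ℝ) (X : n → ℂ) :
    ((symmetrizer ℓ₁ ℓ₂ β * A) *ᵥ X) ⬝ᵥ star X
      = ν₁ * normSq (ℓ₁ ⬝ᵥ X) - β * ν₂ * normSq (ℓ₂ ⬝ᵥ X) := by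
  simp [symmetrizer, sub_mul, vecMulVec_mul, h₁, h₂, sub_mulVec, smul_mulVec,
    vecMulVec_star_mulVec_dotProduct_star, sub_dotProduct, mul_conj, smul_dotProduct, mul_assoc]

end Symmetrizer

section Smoothness

variable {E : Type*} [NormedAddCommGroup E] [NormedSpace ℝ E] {k : WithTop ℕ∞} {U : Set E}

lemma ContDiffOn.symmetrizer {n : Type*} [Fintype n] {ℓ₁ ℓ₂ : E → n → ℂ}
    (h₁ : ContDiffOn ℝ k ℓ₁ U) (h₂ : ContDiffOn ℝ k ℓ₂ U) (β : ℝ) :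
    ContDiffOn ℝ k (fun x i j => symmetrizer (ℓ₁ x) (ℓ₂ x) β i j) U := by
  have hstar : ∀ {ℓ : E → n → ℂ}, ContDiffOn ℝ k ℓ U → ∀ i,
      ContDiffOn ℝ k (fun x => star (ℓ x i)) U := fun h i =>
    conjCLE.contDiff.comp_contDiffOn (contDiffOn_pi.1 h i)
  refine contDiffOn_pi.2 fun i => contDiffOn_pi.2 fun j => ?_
  simp only [_root_.symmetrizer, Matrix.sub_apply, Matrix.smul_apply, vecMulVec_apply,
    Pi.star_apply, smul_eq_mul]
  exact ((hstar h₁ i).mul (contDiffOn_pi.1 h₁ j)).sub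
    (contDiffOn_const.mul ((hstar h₂ i).mul (contDiffOn_pi.1 h₂ j)))

lemma ContDiffOn.vecCons_neg_one {ν : E → ℂ} (h : ContDiffOn ℝ k ν U) :
    ContDiffOn ℝ k (fun x => ![-ν x, 1]) U :=
  contDiffOn_pi.2 fun i => by fin_cases i; exacts [h.neg, contDiffOn_const]

end Smoothness

def companion (ν₁ ν₂ : ℂ) : Matrix (Fin 2) (Fin 2) ℂ := !![0, 1; -(ν₁ * ν₂), ν₁ + ν₂]

lemma companion_comm (ν₁ ν₂ : ℂ) : companion ν₁ ν₂ = companion ν₂ ν₁ := by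
  simp [companion, mul_comm, add_comm]

lemma vecMul_companion (ν₁ ν₂ : ℂ) : ![-ν₂, 1] ᵥ* companion ν₁ ν₂ = ν₁ • ![-ν₂, 1] := by
  ext i; fin_cases i <;> simp [companion, vecMul, dotProduct, Fin.sum_univ_two]

lemma companion_half_add_sub (c d μ : ℂ) (hμ : μ ^ 2 = c + (d / 2) ^ 2) :
    companion (d / 2 + μ) (d / 2 - μ) = !![0, 1; c, d] := by
  simp only [companion]
  congr
  · linear_combination hμ
  · ring

lemma normSq_add_normSq_le_of_re_separated {c L : ℝ} {ν₁ ν₂ : ℂ} (hc : 0 < c)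
    (h₁ : c ≤ ν₁.re) (h₂ : ν₂.re ≤ -c) (hL : ‖ν₂‖ ≤ L) (a b : ℂ) :
    normSq a + normSq b
      ≤ (2 + (1 / 2 + L ^ 2) / c ^ 2) * (normSq (-ν₂ * a + b) + normSq (-ν₁ * a + b)) := by
  set z₁ := -ν₂ * a + b
  set z₂ := -ν₁ * a + b
  have hgap : 4 * c ^ 2 ≤ normSq (ν₁ - ν₂) := by
    have h : 2 * c ≤ (ν₁ - ν₂).re := by rw [sub_re]; linarith
    nlinarith [re_sq_le_normSq (ν₁ - ν₂)]
  have ha : 4 * c ^ 2 * normSq a ≤ 2 * (normSq z₁ + normSq z₂) :=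
    calc 4 * c ^ 2 * normSq a ≤ normSq (ν₁ - ν₂) * normSq a := by
          gcongr; exact normSq_nonneg a
      _ = normSq (z₁ + -z₂) := by rw [← normSq_mul]; congr 1; simp only [z₁, z₂]; ring
      _ ≤ 2 * (normSq z₁ + normSq z₂) := by
          simpa only [normSq_neg] using normSq_add_le_two_mul z₁ (-z₂)
  have hb : normSq b ≤ 2 * (normSq z₁ + L ^ 2 * normSq a) :=
    calc normSq b = normSq (z₁ + ν₂ * a) := by congr 1; simp only [z₁]; ring
      _ ≤ 2 * (normSq z₁ + normSq (ν₂ * a)) := normSq_add_le_two_mul _ _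
      _ ≤ 2 * (normSq z₁ + L ^ 2 * normSq a) := by
          rw [normSq_mul, normSq_eq_norm_sq ν₂]
          gcongr
          exact normSq_nonneg a
  have ha' : normSq a ≤ (normSq z₁ + normSq z₂) / (2 * c ^ 2) := by
    rw [le_div_iff₀ (by positivity)]; linarith
  calc normSq a + normSq b ≤ 2 * (normSq z₁ + normSq z₂) + (1 + 2 * L ^ 2) * normSq a := by
        nlinarith [normSq_nonneg z₂]
    _ ≤ 2 * (normSq z₁ + normSq z₂)
          + (1 + 2 * L ^ 2) * ((normSq z₁ + normSq z₂) / (2 * c ^ 2)) := by gcongr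
    _ = _ := by field_simp

lemma eigenCoords_le_boundary_form {β L : ℝ} {ν₁ ν₂ : ℂ} (hβ : 0 ≤ β)
    (hβL : β * (5 + 16 * L ^ 2) ≤ 1) (hL₁ : ‖ν₁‖ ≤ L) (hL₂ : ‖ν₂‖ ≤ L) (a b : ℂ) :
    β * (normSq (-ν₂ * a + b) + normSq (-ν₁ * a + b))
      ≤ normSq (-ν₂ * a + b) - β * normSq (-ν₁ * a + b) + normSq a := by
  set z₁ := -ν₂ * a + b
  set z₂ := -ν₁ * a + b
  have hdiff : normSq (ν₁ - ν₂) ≤ 4 * L ^ 2 :=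
    calc normSq (ν₁ - ν₂) ≤ 2 * (normSq ν₁ + normSq (-ν₂)) := by
          rw [sub_eq_add_neg]; exact normSq_add_le_two_mul _ _
      _ ≤ 2 * (L ^ 2 + L ^ 2) := by
          rw [normSq_neg, normSq_eq_norm_sq, normSq_eq_norm_sq]
          gcongr
      _ = 4 * L ^ 2 := by ring
  have hz₂ : normSq z₂ ≤ 2 * normSq z₁ + 8 * L ^ 2 * normSq a :=
    calc normSq z₂ = normSq (z₁ + -((ν₁ - ν₂) * a)) := by congr 1; simp only [z₁, z₂]; ring
      _ ≤ 2 * (normSq z₁ + normSq (ν₁ - ν₂) * normSq a) := by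
          simpa only [normSq_neg, normSq_mul] using normSq_add_le_two_mul z₁ (-((ν₁ - ν₂) * a))
      _ ≤ 2 * (normSq z₁ + 4 * L ^ 2 * normSq a) := by gcongr; exact normSq_nonneg a
      _ = 2 * normSq z₁ + 8 * L ^ 2 * normSq a := by ring
  have h5 : 5 * β ≤ 1 := by nlinarith [sq_nonneg L]
  have h16 : 16 * β * L ^ 2 ≤ 1 := by nlinarith
  nlinarith [mul_le_mul_of_nonneg_left hz₂ hβ, mul_le_mul_of_nonneg_right h5 (normSq_nonneg z₁),
    mul_le_mul_of_nonneg_right h16 (normSq_nonneg a)]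

theorem companion_symmetrizer_coercive {c L : ℝ} (hc : 0 < c) :
    ∃ β κ : ℝ, 0 < κ ∧ ∀ ν₁ ν₂ : ℂ, c ≤ ν₁.re → ν₂.re ≤ -c → ‖ν₁‖ ≤ L → ‖ν₂‖ ≤ L →
      ∀ X : Fin 2 → ℂ,
        κ * ∑ i, normSq (X i)
            ≤ (((symmetrizer ![-ν₂, 1] ![-ν₁, 1] β * companion ν₁ ν₂) *ᵥ X) ⬝ᵥ star X).re ∧
          κ * ∑ i, normSq (X i)
            ≤ ((symmetrizer ![-ν₂, 1] ![-ν₁, 1] β *ᵥ X) ⬝ᵥ star X).re + normSq (X 0) := by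
  set β := (5 + 16 * L ^ 2)⁻¹
  set K := 2 + (1 / 2 + L ^ 2) / c ^ 2
  have hβ : 0 < β := by positivity
  have hβL : β * (5 + 16 * L ^ 2) ≤ 1 := (inv_mul_cancel₀ (by positivity)).le
  refine ⟨β, β * min c 1 / K, by positivity, fun ν₁ ν₂ h₁ h₂ hL₁ hL₂ X => ?_⟩
  rw [symmetrizer_mul_mulVec_dotProduct_star (vecMul_companion ν₁ ν₂)
      (companion_comm ν₁ ν₂ ▸ vecMul_companion ν₂ ν₁), symmetrizer_mulVec_dotProduct_star]
  simp only [dotProduct, Fin.sum_univ_two, cons_val_zero, cons_val_one, one_mul, sub_re, mul_re,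
    ofReal_re, ofReal_im, mul_zero, sub_zero]
  have hX : _ ≤ K * _ := normSq_add_normSq_le_of_re_separated hc h₁ h₂ hL₂ (X 0) (X 1)
  set N₁ := normSq (-ν₂ * X 0 + X 1)
  set N₂ := normSq (-ν₁ * X 0 + X 1)
  have hN₁ : 0 ≤ N₁ := normSq_nonneg _
  have hN₂ : 0 ≤ N₂ := normSq_nonneg _
  have hκ : β * min c 1 / K * (normSq (X 0) + normSq (X 1)) ≤ β * min c 1 * (N₁ + N₂) := by
    rw [div_mul_eq_mul_div, div_le_iff₀ (by positivity)]
    nlinarith [mul_le_mul_of_nonneg_left hX (by positivity : 0 ≤ β * min c 1)]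
  have hβmin : β * min c 1 ≤ min c 1 :=
    mul_le_of_le_one_left (by positivity) (inv_le_one_of_one_le₀ (by nlinarith [sq_nonneg L]))
  constructor
  · have e₁ : β * min c 1 * N₁ ≤ ν₁.re * N₁ := by gcongr; linarith [min_le_left c 1]
    have e₂ : β * min c 1 * N₂ ≤ β * -ν₂.re * N₂ := by
      gcongr
      linarith [min_le_left c 1]
    linarith
  · have e₁ : β * min c 1 * (N₁ + N₂) ≤ β * (N₁ + N₂) := by
      gcongr
      exact mul_le_of_le_one_right hβ.le (min_le_right c 1)
    linarith [eigenCoords_le_boundary_form hβ.le hβL hL₁ hL₂ (X 0) (X 1)]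

noncomputable def symbolDisc (p : ParamSpace) : ℂ := calA p 1 0 + (calA p 1 1 / 2) ^ 2

noncomputable def symbolRoot (p : ParamSpace) : ℂ := symbolDisc p ^ (2⁻¹ : ℂ)

noncomputable def symbolEigenvaluePos (p : ParamSpace) : ℂ := calA p 1 1 / 2 + symbolRoot p

noncomputable def symbolEigenvalueNeg (p : ParamSpace) : ℂ := calA p 1 1 / 2 - symbolRoot p

def symbolDomain : Set ParamSpace := {p | p.1.2 2 2 ≠ 0 ∧ symbolDisc p ∈ slitPlane}

lemma companion_symbolEigenvalue (p : ParamSpace) :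
    companion (symbolEigenvaluePos p) (symbolEigenvalueNeg p) = calA p := by
  rw [symbolEigenvaluePos, symbolEigenvalueNeg, symbolRoot,
    companion_half_add_sub _ _ _ (cpow_ofNat_inv_pow (symbolDisc p) 2), eta_fin_two (calA p)]
  simp [calA]

lemma re_calA_one_one (p : ParamSpace) : (calA p 1 1).re = 0 := by simp [calA]

lemma re_symbolEigenvaluePos (p : ParamSpace) :
    (symbolEigenvaluePos p).re = (symbolRoot p).re := by
  simp [symbolEigenvaluePos, re_calA_one_one]

lemma re_symbolEigenvalueNeg (p : ParamSpace) :
    (symbolEigenvalueNeg p).re = -(symbolRoot p).re := by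
  simp [symbolEigenvalueNeg, re_calA_one_one]

lemma contDiffAt_calA {p : ParamSpace} (hp : p.1.2 2 2 ≠ 0) (i j : Fin 2) :
    ContDiffAt ℝ (⊤ : ℕ∞) (fun q => calA q i j) p := by
  fin_cases i <;> fin_cases j <;>
    simp only [calA, Fin.zero_eta, Fin.mk_one, one_ne_zero, ↓reduceIte, ← ofRealCLM_apply] <;>
    fun_prop (disch := assumption)

lemma contDiffAt_symbolDisc {p : ParamSpace} (hp : p.1.2 2 2 ≠ 0) :
    ContDiffAt ℝ (⊤ : ℕ∞) symbolDisc p :=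
  (contDiffAt_calA hp 1 0).add (((contDiffAt_calA hp 1 1).div_const 2).pow 2)

lemma isOpen_symbolDomain : IsOpen symbolDomain :=
  ContinuousOn.isOpen_inter_preimage
    (fun _ hp => (contDiffAt_symbolDisc hp).continuousAt.continuousWithinAt)
    (isOpen_ne_fun (by fun_prop) continuous_const) isOpen_slitPlane

lemma contDiffOn_symbolRoot : ContDiffOn ℝ (⊤ : ℕ∞) symbolRoot symbolDomain := by
  intro p hp
  show ContDiffWithinAt ℝ _ ((fun w : ℂ => w ^ (2⁻¹ : ℂ)) ∘ symbolDisc) _ _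
  exact (((analyticAt_id.cpow analyticAt_const hp.2).contDiffAt.restrict_scalars ℝ).comp p
    (contDiffAt_symbolDisc hp.1)).contDiffWithinAt

lemma contDiffOn_symbolEigenvaluePos :
    ContDiffOn ℝ (⊤ : ℕ∞) symbolEigenvaluePos symbolDomain :=
  ContDiffOn.add (fun _ (hp : _ ∈ symbolDomain) =>
    ((contDiffAt_calA hp.1 1 1).div_const 2).contDiffWithinAt) contDiffOn_symbolRoot

lemma contDiffOn_symbolEigenvalueNeg :
    ContDiffOn ℝ (⊤ : ℕ∞) symbolEigenvalueNeg symbolDomain :=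
  ContDiffOn.sub (fun _ (hp : _ ∈ symbolDomain) =>
    ((contDiffAt_calA hp.1 1 1).div_const 2).contDiffWithinAt) contDiffOn_symbolRoot

lemma calA_one_one_div_two_sq (p : ParamSpace) :
    (calA p 1 1 / 2) ^ 2
      = ((-(∑ k : Fin 2, p.1.2 k.castSucc 2 / p.1.2 2 2 * p.2.2.2 k) ^ 2 : ℝ) : ℂ) := by
  simp only [calA, one_ne_zero, ↓reduceIte]
  push_cast
  linear_combination (∑ k : Fin 2, (p.1.2 k.castSucc 2 : ℂ) / p.1.2 2 2 * p.2.2.2 k) ^ 2 * I_sq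

lemma symbolDisc_re (p : ParamSpace) (hp : p.1.2 2 2 ≠ 0) :
    (symbolDisc p).re = (p.1.1 * p.2.1
      + (∑ k : Fin 2, ∑ l : Fin 2, p.1.2 k.castSucc l.castSucc * p.2.2.2 k * p.2.2.2 l
        - (∑ k : Fin 2, p.1.2 k.castSucc 2 * p.2.2.2 k) ^ 2 / p.1.2 2 2)) / p.1.2 2 2 := by
  rw [symbolDisc, calA_one_one_div_two_sq]
  simp only [calA, one_ne_zero, ↓reduceIte, add_re, ofReal_re, mul_re, I_re, I_im, ofReal_im,
    Fin.sum_univ_two]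
  field_simp
  ring

lemma symbolDisc_im (p : ParamSpace) : (symbolDisc p).im = p.1.1 / p.1.2 2 2 * p.2.2.1 := by
  rw [symbolDisc, calA_one_one_div_two_sq]
  simp only [calA, one_ne_zero, ↓reduceIte, add_im, ofReal_re, mul_im, I_re, I_im, ofReal_im]
  ring

lemma symbolDisc_mem_slitPlane {m c₀ M : ℝ} (hm : 0 < m) (hc₀ : 0 < c₀) {p : ParamSpace}
    (hp : p ∈ coeffSet m c₀ M ×ˢ paraSphere) : symbolDisc p ∈ slitPlane := by
  obtain ⟨⟨ha₀, ha₃₃, hsym, -, hpos⟩, hγ, hsphere⟩ := hp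
  have h₃₃ : 0 < p.1.2 2 2 := hm.trans_le ha₃₃
  have hschur := schur_complement_ge (n := 2) hc₀.le hsym hpos h₃₃ p.2.2.2
  rw [show Fin.last 2 = (2 : Fin 3) from rfl] at hschur
  have hs : 0 ≤ ∑ k : Fin 2, p.2.2.2 k ^ 2 := by positivity
  rw [mem_slitPlane_iff]
  by_cases hdiss : 0 < p.1.1 * p.2.1 + c₀ * ∑ k : Fin 2, p.2.2.2 k ^ 2
  · left
    rw [symbolDisc_re p h₃₃.ne']
    exact div_pos (by linarith) h₃₃
  · right
    have hγ₀ : p.2.1 = 0 := by nlinarith [mul_nonneg (hm.le.trans ha₀) hγ]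
    have hs₀ : ∑ k : Fin 2, p.2.2.2 k ^ 2 = 0 := by nlinarith [mul_nonneg (hm.le.trans ha₀) hγ]
    have hτ : p.2.2.1 ≠ 0 := by
      rintro hτ
      rw [hγ₀, hτ, hs₀] at hsphere
      norm_num at hsphere
    rw [symbolDisc_im]
    exact mul_ne_zero (div_ne_zero (hm.trans_le ha₀).ne' h₃₃.ne') hτ

lemma isCompact_coeffSet (m c₀ M : ℝ) : IsCompact (coeffSet m c₀ M) := by
  refine Metric.isCompact_of_isClosed_isBounded ?_ ?_
  · simp only [coeffSet, Set.ofPred_and, Set.ofPred_forall]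
    refine .inter ?_ (.inter ?_ (.inter ?_ (.inter ?_ ?_)))
    · exact isClosed_le (by fun_prop) (by fun_prop)
    · exact isClosed_le (by fun_prop) (by fun_prop)
    · exact isClosed_iInter fun _ => isClosed_iInter fun _ =>
        isClosed_eq (by fun_prop) (by fun_prop)
    · exact isClosed_le (by fun_prop) (by fun_prop)
    · exact isClosed_iInter fun η => isClosed_le (by fun_prop) (by fun_prop)
  · refine isBounded_iff_forall_norm_le.2 ⟨M, fun p hp => ?_⟩
    obtain ⟨-, -, -, hM, -⟩ := hp
    have hsqrt := Real.sqrt_nonneg (∑ i : Fin 3, ∑ j : Fin 3, p.2 i j ^ 2)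
    have hM₀ : 0 ≤ M := by linarith [abs_nonneg p.1]
    refine norm_prod_le_iff.2 ⟨by rw [Real.norm_eq_abs]; linarith, ?_⟩
    refine (pi_norm_le_iff_of_nonneg hM₀).2 fun i => (pi_norm_le_iff_of_nonneg hM₀).2 fun j => ?_
    have hij : p.2 i j ^ 2 ≤ ∑ i : Fin 3, ∑ j : Fin 3, p.2 i j ^ 2 :=
      (Finset.single_le_sum (fun j _ => sq_nonneg (p.2 i j)) (Finset.mem_univ j)).trans
        (Finset.single_le_sum (f := fun i => ∑ j : Fin 3, p.2 i j ^ 2)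
          (fun i _ => by positivity) (Finset.mem_univ i))
    rw [Real.norm_eq_abs]
    linarith [Real.abs_le_sqrt hij, abs_nonneg p.1]

lemma isCompact_paraSphere : IsCompact paraSphere := by
  refine Metric.isCompact_of_isClosed_isBounded ?_ ?_
  · simp only [paraSphere, Set.ofPred_and]
    exact .inter (isClosed_le continuous_const (by fun_prop))
      (isClosed_eq (by fun_prop) continuous_const)
  · refine isBounded_iff_forall_norm_le.2 ⟨1, fun ζ hζ => ?_⟩
    obtain ⟨hγ, hsphere⟩ := hζ
    have hs : 0 ≤ ∑ k : Fin 2, ζ.2.2 k ^ 2 := by positivity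
    have hs₁ : ∑ k : Fin 2, ζ.2.2 k ^ 2 ≤ 1 := by nlinarith
    refine norm_prod_le_iff.2 ⟨?_, norm_prod_le_iff.2 ⟨?_,
      (pi_norm_le_iff_of_nonneg zero_le_one).2 fun k => ?_⟩⟩ <;>
      rw [Real.norm_eq_abs, ← sq_le_one_iff_abs_le_one]
    · nlinarith
    · nlinarith
    · exact (Finset.single_le_sum (fun k _ => sq_nonneg (ζ.2.2 k)) (Finset.mem_univ k)).trans hs₁

theorem microlocal_symmetrizer_general (m c₀ M : ℝ) (hm : 0 < m) (hc₀ : 0 < c₀) :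
    ∃ κ : ℝ, 0 < κ ∧
      ∃ U : Set ParamSpace, IsOpen U ∧ coeffSet m c₀ M ×ˢ paraSphere ⊆ U ∧
        ∃ 𝒮 : ParamSpace → Fin 2 → Fin 2 → ℂ,
          ContDiffOn ℝ (⊤ : ℕ∞) 𝒮 U ∧
          ∀ p ∈ coeffSet m c₀ M ×ˢ paraSphere,
            (∀ i j, 𝒮 p i j = starRingEnd ℂ (𝒮 p j i)) ∧
            (∀ X : Fin 2 → ℂ,
              κ * (∑ i : Fin 2, Complex.normSq (X i))
                ≤ (∑ i : Fin 2,
                    (∑ j : Fin 2, (∑ k : Fin 2, 𝒮 p i k * calA p k j) * X j)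
                      * starRingEnd ℂ (X i)).re) ∧
            (∀ X : Fin 2 → ℂ,
              κ * (∑ i : Fin 2, Complex.normSq (X i))
                ≤ (∑ i : Fin 2, (∑ j : Fin 2, 𝒮 p i j * X j) * starRingEnd ℂ (X i)).re
                  + Complex.normSq (X 0)) := by
  have hK : IsCompact (coeffSet m c₀ M ×ˢ paraSphere) :=
    (isCompact_coeffSet m c₀ M).prod isCompact_paraSphere
  have hKU : coeffSet m c₀ M ×ˢ paraSphere ⊆ symbolDomain := fun p hp =>
    ⟨(hm.trans_le hp.1.2.1).ne', symbolDisc_mem_slitPlane hm hc₀ hp⟩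
  have hpos := contDiffOn_symbolEigenvaluePos
  have hneg := contDiffOn_symbolEigenvalueNeg
  obtain ⟨c, hc, hcK⟩ := hK.exists_forall_le'
    (continuous_re.comp_continuousOn (contDiffOn_symbolRoot.continuousOn.mono hKU))
    fun p hp => re_cpow_inv_two_pos (hKU hp).2
  obtain ⟨L, hL⟩ := hK.exists_bound_of_continuousOn
    ((hpos.continuousOn.prodMk hneg.continuousOn).mono hKU)
  obtain ⟨β, κ, hκ, hest⟩ := companion_symmetrizer_coercive (L := L) hc
  refine ⟨κ, hκ, symbolDomain, isOpen_symbolDomain, hKU,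
    fun p => symmetrizer ![-symbolEigenvalueNeg p, 1] ![-symbolEigenvaluePos p, 1] β,
    hneg.vecCons_neg_one.symmetrizer hpos.vecCons_neg_one β, fun p hp => ?_⟩
  have hcp : c ≤ (symbolRoot p).re := hcK p hp
  have hX := hest _ _ (hcp.trans_eq (re_symbolEigenvaluePos p).symm)
    (by rw [re_symbolEigenvalueNeg]; linarith)
    ((norm_fst_le _).trans (hL p hp)) ((norm_snd_le _).trans (hL p hp))
  rw [← companion_symbolEigenvalue p]
  exact ⟨fun i j => ((isHermitian_symmetrizer _ _ β).apply i j).symm, fun X => (hX X).1,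
    fun X => (hX X).2⟩

/-- Lemma 10.5 of the paper: existence of a smooth microlocal symmetrizer `𝒮` on a
neighborhood of `𝒦 × S₊`, Hermitian on `𝒦 × S₊`, with `Re⟨𝒮𝒜X, X⟩ ≥ κ|X|²` and
`⟨𝒮X, X⟩ + |X₁|² ≥ κ|X|²`. -/
theorem microlocal_symmetrizer (m c₀ M : ℝ) (hm : 0 < m) (hc₀ : 0 < c₀) (hM : 0 < M) :
    ∃ κ : ℝ, 0 < κ ∧
      ∃ U : Set ParamSpace, IsOpen U ∧ coeffSet m c₀ M ×ˢ paraSphere ⊆ U ∧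
        ∃ 𝒮 : ParamSpace → Fin 2 → Fin 2 → ℂ,
          ContDiffOn ℝ (⊤ : ℕ∞) 𝒮 U ∧
          ∀ p ∈ coeffSet m c₀ M ×ˢ paraSphere,
            (∀ i j, 𝒮 p i j = starRingEnd ℂ (𝒮 p j i)) ∧
            (∀ X : Fin 2 → ℂ,
              κ * (∑ i : Fin 2, Complex.normSq (X i))
                ≤ (∑ i : Fin 2,
                    (∑ j : Fin 2, (∑ k : Fin 2, 𝒮 p i k * calA p k j) * X j)
                      * starRingEnd ℂ (X i)).re) ∧
            (∀ X : Fin 2 → ℂ,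
              κ * (∑ i : Fin 2, Complex.normSq (X i))
                ≤ (∑ i : Fin 2, (∑ j : Fin 2, 𝒮 p i j * X j) * starRingEnd ℂ (X i)).re
                  + Complex.normSq (X 0)) :=
  microlocal_symmetrizer_general m c₀ M hm hc₀
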